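/- arXiv:0709.3785 — 4 statements merged into one kernel-verified Lean document; each statement's English description precedes it below -/
import Mathlib

section
/- Let g ∈ ℂ[y_1,…,y_k] be a polynomial with exactly k+1 terms whose Newton polytope is a k-dimensional simplex. Then the hypersurface V(g) has no singular points in the torus (ℂ*)^k; that is, there is no point ξ ∈ (ℂ*)^k with g(ξ) = 0 and ∂g/∂y_i(ξ) = 0 for all i = 1,…,k. -/
/-!
At a point `ξ` of the torus every term `t_d = c_d ξ^d` of `g` is nonzero. The equations
`g(ξ) = 0` and `ξ_i ∂g/∂y_i (ξ) = 0` say `∑ t_d = 0` and `∑ t_d d = 0`, so the numbers `t_d`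
are the weights of a nontrivial affine dependence among the exponent vectors `d`, which is
impossible when these are the vertices of a simplex.
-/

open MvPolynomial

namespace MvPolynomial

variable {R σ : Type*} [CommSemiring R]

lemma eval_eq_sum_eval_monomial (ξ : σ → R) (g : MvPolynomial σ R) :
    eval ξ g = ∑ d ∈ g.support, eval ξ (monomial d (coeff d g)) := by
  conv_lhs => rw [g.as_sum]
  exact map_sum _ _ _

lemma eval_X_mul_pderiv (ξ : σ → R) (i : σ) (g : MvPolynomial σ R) :
    eval ξ (X i * pderiv i g) =
      ∑ d ∈ g.support, (d i : R) * eval ξ (monomial d (coeff d g)) := by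
  conv_lhs => rw [g.as_sum]
  simp only [map_sum, Finset.mul_sum, X_mul_pderiv_monomial, nsmul_eq_mul, map_mul, map_natCast]

lemma eval_monomial_ne_zero [NoZeroDivisors R] [Nontrivial R] {ξ : σ → R} (hξ : ∀ i, ξ i ≠ 0)
    {d : σ →₀ ℕ} {a : R} (ha : a ≠ 0) : eval ξ (monomial d a) ≠ 0 := by
  rw [eval_monomial]
  exact mul_ne_zero ha (Finsupp.prod_ne_zero_iff.mpr fun i _ => pow_ne_zero _ (hξ i))

end MvPolynomial

lemma AffineIndependent.eq_zero_of_sum_eq_zero_complex {ι σ : Type*} {p : ι → σ → ℝ}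
    (hp : AffineIndependent ℝ p) {s : Finset ι} {w : ι → ℂ}
    (hw₀ : ∑ i ∈ s, w i = 0) (hw₁ : ∀ j, ∑ i ∈ s, w i * p i j = 0) : ∀ i ∈ s, w i = 0 := by
  have hre : ∀ i ∈ s, (w i).re = 0 := by
    refine hp.eq_zero_of_sum_eq_zero ?_ (funext fun j => ?_)
    · simpa [Complex.re_sum] using congrArg Complex.re hw₀
    · simpa [Complex.re_sum] using congrArg Complex.re (hw₁ j)
  have him : ∀ i ∈ s, (w i).im = 0 := by
    refine hp.eq_zero_of_sum_eq_zero ?_ (funext fun j => ?_)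
    · simpa [Complex.im_sum] using congrArg Complex.im hw₀
    · simpa [Complex.im_sum] using congrArg Complex.im (hw₁ j)
  exact fun i hi => Complex.ext (hre i hi) (him i hi)

/-- a polynomial in k variables with exactly k+1 terms whose Newton
polytope is a k-dimensional simplex (i.e. whose exponent vectors are affinely
independent) has no singular points in the torus (ℂ*)^k. -/
theorem stmt_1 {k : ℕ} (g : MvPolynomial (Fin k) ℂ)
    (hcard : g.support.card = k + 1)
    (hsimplex : AffineIndependent ℝ
      (fun ω : {x // x ∈ g.support} => (fun i => (ω.1 i : ℝ) : Fin k → ℝ))) :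
    ¬ ∃ ξ : Fin k → ℂ, (∀ i, ξ i ≠ 0) ∧ eval ξ g = 0 ∧
        ∀ i, eval ξ (pderiv i g) = 0 := by
  rintro ⟨ξ, hξ, hg, hdg⟩
  obtain ⟨d, hd⟩ : g.support.Nonempty := Finset.card_pos.mp (by omega)
  set t : (Fin k →₀ ℕ) → ℂ := fun d => eval ξ (monomial d (coeff d g))
  have hsum : ∑ ω : g.support, t ω.1 = 0 := by
    rw [Finset.sum_coe_sort g.support t, ← eval_eq_sum_eval_monomial, hg]
  have hmoment : ∀ i, ∑ ω : g.support, t ω.1 * (ω.1 i : ℝ) = 0 := fun i => by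
    push_cast
    rw [Finset.sum_coe_sort g.support fun d => t d * d i]
    simp_rw [mul_comm (t _)]
    rw [← eval_X_mul_pderiv, map_mul, hdg i, mul_zero]
  exact eval_monomial_ne_zero hξ (mem_support_iff.mp hd)
    (hsimplex.eq_zero_of_sum_eq_zero_complex hsum hmoment ⟨d, hd⟩ (Finset.mem_univ _))
end

section
/- In the setting of a cycle determined by an interior lattice point ω̃ with surrounding points ω_0 = ω_k, ω_1, …, ω_k = ω_0 (indices cyclic), set w_i = ω_i − ω̃, D_{i,j} = det(w_i,w_j), u = ψ(ω̃), u_j = ψ(ω_j), and let λ_j be the lattice length of the cycle edge dual to the segment from ω̃ to ω_j. Then λ_j = (u−u_{j−1})/D_{j−1,j} + (u−u_{j+1})/D_{j,j+1} + (u−u_j)·D_{j+1,j−1}/(D_{j−1,j}·D_{j,j+1}), and hence the total cycle length equals Σ_{j=1}^k (u−u_j)·(D_{j−1,j}+D_{j,j+1}+D_{j+1,j−1})/(D_{j−1,j}·D_{j,j+1}). -/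
/-!
Write `a = w_{j-1}`, `b = w_j`, `c = w_{j+1}`. In the plane every triple of vectors satisfies
`det(a,b) c + det(b,c) a + det(c,a) b = 0`; pairing it with `v_{j-1}` expresses `c · v_{j-1}`
through `a · v_{j-1} = u - u_{j-1}` and `b · v_{j-1} = u - u_j`. Pairing the edge relation
`v_j - v_{j-1} = λ_j b^⊥` with `c` gives `λ_j det(b,c) = (u - u_{j+1}) - c · v_{j-1}`, which is the
formula for `λ_j`. Summing over the cycle and shifting indices collects the three terms at each `u_j`.
-/

/-- determinant of the 2×2 matrix with columns `u`, `v` -/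
def det2 (u v : ℝ × ℝ) : ℝ := u.1 * v.2 - u.2 * v.1

/-- standard inner product on ℝ² -/
def dot2 (u v : ℝ × ℝ) : ℝ := u.1 * v.1 + u.2 * v.2

/-- rotation by 90 degrees: `w^⊥ = (−w₂, w₁)` -/
def perp2 (w : ℝ × ℝ) : ℝ × ℝ := (-w.2, w.1)

theorem dot2_sub_right (c x y : ℝ × ℝ) : dot2 c (y - x) = dot2 c y - dot2 c x := by
  simp only [dot2, Prod.fst_sub, Prod.snd_sub]
  ring

theorem dot2_smul_right (c x : ℝ × ℝ) (t : ℝ) : dot2 c (t • x) = t * dot2 c x := by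
  simp only [dot2, Prod.smul_fst, Prod.smul_snd, smul_eq_mul]
  ring

theorem dot2_perp2 (a b : ℝ × ℝ) : dot2 a (perp2 b) = det2 b a := by
  simp only [dot2, perp2, det2]
  ring

theorem det2_mul_dot2_add_cyclic (a b c x : ℝ × ℝ) :
    det2 a b * dot2 c x + det2 b c * dot2 a x + det2 c a * dot2 b x = 0 := by
  simp only [det2, dot2]
  ring

theorem coeff_eq_of_sub_eq_smul_perp2 {a b c x y : ℝ × ℝ} {α β γ t : ℝ}
    (hab : det2 a b ≠ 0) (hbc : det2 b c ≠ 0)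
    (hax : dot2 a x = α) (hbx : dot2 b x = β) (hcy : dot2 c y = γ)
    (hyx : y - x = t • perp2 b) :
    t = α / det2 a b + γ / det2 b c + β * det2 c a / (det2 a b * det2 b c) := by
  have hedge : γ - dot2 c x = t * det2 b c := by
    rw [← hcy, ← dot2_sub_right, hyx, dot2_smul_right, dot2_perp2]
  have hcramer := det2_mul_dot2_add_cyclic a b c x
  rw [hax, hbx] at hcramer
  field_simp
  linear_combination -det2 a b * hedge - hcramer

theorem sum_div_add_div_add_mul_div_eq {G K : Type*} [AddGroup G] [Fintype G] [Field K]
    (g : G) (p D E : G → K) (hD : ∀ j, D j ≠ 0) :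
    ∑ j, (p (j - g) / D (j - g) + p (j + g) / D j + p j * E j / (D (j - g) * D j)) =
      ∑ j, p j * ((D (j - g) + D j + E j) / (D (j - g) * D j)) := by
  have shift_left : ∑ j, p (j - g) / D (j - g) = ∑ j, p j / D j :=
    (Equiv.subRight g).sum_comp fun j => p j / D j
  have shift_right : ∑ j, p (j + g) / D j = ∑ j, p j / D (j - g) :=
    Fintype.sum_equiv (Equiv.addRight g) _ _ fun j => by simp
  rw [Finset.sum_add_distrib, Finset.sum_add_distrib, shift_left, shift_right,
    ← Finset.sum_add_distrib, ← Finset.sum_add_distrib]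
  refine Finset.sum_congr rfl fun j _ => ?_
  have := hD j
  have := hD (j - g)
  field_simp

/-- Here `v j` is the vertex of the tropical curve dual to the cell `Q_j`, characterized by
`w_j · v_j = u − u_j` and `w_{j+1} · v_j = u − u_{j+1}`, and `λ_j` is defined by
`v_j − v_{j−1} = λ_j • w_j^⊥`; indices are cyclic in `ZMod k`. -/
theorem stmt_6 {k : ℕ} [NeZero k]
    (w : ZMod k → ℝ × ℝ) (u : ℝ) (uu : ZMod k → ℝ)
    (v : ZMod k → ℝ × ℝ) (lam : ZMod k → ℝ)
    (hD : ∀ j, det2 (w j) (w (j + 1)) ≠ 0)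
    (hv : ∀ j, dot2 (w j) (v j) = u - uu j ∧ dot2 (w (j + 1)) (v j) = u - uu (j + 1))
    (hlam : ∀ j, v j - v (j - 1) = lam j • perp2 (w j)) :
    (∀ j, lam j =
        (u - uu (j - 1)) / det2 (w (j - 1)) (w j)
        + (u - uu (j + 1)) / det2 (w j) (w (j + 1))
        + (u - uu j) * det2 (w (j + 1)) (w (j - 1))
            / (det2 (w (j - 1)) (w j) * det2 (w j) (w (j + 1)))) ∧
    ∑ j : ZMod k, lam j =
      ∑ j : ZMod k, (u - uu j) *
        ((det2 (w (j - 1)) (w j) + det2 (w j) (w (j + 1)) + det2 (w (j + 1)) (w (j - 1)))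
          / (det2 (w (j - 1)) (w j) * det2 (w j) (w (j + 1)))) := by
  have hlam_eq : ∀ j, lam j =
      (u - uu (j - 1)) / det2 (w (j - 1)) (w j)
      + (u - uu (j + 1)) / det2 (w j) (w (j + 1))
      + (u - uu j) * det2 (w (j + 1)) (w (j - 1))
          / (det2 (w (j - 1)) (w j) * det2 (w j) (w (j + 1))) := by
    intro j
    have hprev := hD (j - 1)
    obtain ⟨hax, hbx⟩ := hv (j - 1)
    rw [sub_add_cancel] at hprev hbx
    exact coeff_eq_of_sub_eq_smul_perp2 hprev (hD j) hax hbx (hv j).2 (hlam j)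
  refine ⟨hlam_eq, ?_⟩
  rw [Fintype.sum_congr _ _ hlam_eq]
  simpa only [sub_add_cancel] using sum_div_add_div_add_mul_div_eq 1 (fun j => u - uu j)
    (fun i => det2 (w i) (w (i + 1))) (fun j => det2 (w (j + 1)) (w (j - 1))) hD
end

section
/- Consider the circuit relation for three collinear lattice points: suppose w_{i−1}, w_i, w_{i+1} ∈ ℝ^2 satisfy λ·(w_{i−1}−w_i) = w_i − w_{i+1} for some λ ∈ ℝ, and D_{i−1,i}+D_{i,i+1} = D_{i−1,i+1} with D_{i,i+1} = λ·D_{i−1,i}, where D_{a,b} = det(w_a,w_b). Then for any w_{i−2} ∈ ℝ^2 (with all relevant determinants nonzero), (D_{i−2,i−1}+D_{i−1,i}+D_{i,i−2})/(D_{i−2,i−1}·D_{i−1,i}) = (D_{i−2,i−1}+D_{i−1,i+1}+D_{i+1,i−2})/(D_{i−2,i−1}·D_{i−1,i+1}). -/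
lemma det2_self (u : ℝ × ℝ) : det2 u u = 0 := by
  unfold det2; ring

lemma det2_sub_right (u v w : ℝ × ℝ) : det2 u (v - w) = det2 u v - det2 u w := by
  simp only [det2, Prod.fst_sub, Prod.snd_sub]; ring

lemma det2_smul_right (u v : ℝ × ℝ) (t : ℝ) : det2 u (t • v) = t * det2 u v := by
  simp only [det2, Prod.smul_fst, Prod.smul_snd, smul_eq_mul]; ring

lemma det2_add_det2_add_det2 (a b c : ℝ × ℝ) :
    det2 a b + det2 b c + det2 c a = det2 (b - a) (c - b) := by
  simp only [det2, Prod.fst_sub, Prod.snd_sub]; ring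

lemma det2_eq_det2_sub_self (u v : ℝ × ℝ) : det2 u v = det2 u (v - u) := by
  rw [det2_sub_right, det2_self, sub_zero]

lemma det2_eq_mul_of_sub_eq_smul {b c c' : ℝ × ℝ} {t : ℝ} (h : c' - b = t • (c - b)) :
    det2 b c' = t * det2 b c := by
  rw [det2_eq_det2_sub_self b c', h, det2_smul_right, ← det2_eq_det2_sub_self]

theorem cycle_coeff_eq_of_sub_eq_smul (a b c c' : ℝ × ℝ) {t : ℝ} (h : c' - b = t • (c - b))
    (ht : t ≠ 0) :
    (det2 a b + det2 b c + det2 c a) / (det2 a b * det2 b c)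
      = (det2 a b + det2 b c' + det2 c' a) / (det2 a b * det2 b c') := by
  rw [det2_add_det2_add_det2, det2_add_det2_add_det2, h, det2_smul_right,
    det2_eq_mul_of_sub_eq_smul h, mul_left_comm, mul_div_mul_left _ _ ht]

theorem stmt_7_general (wim2 wim wi wip : ℝ × ℝ) (lam : ℝ)
    (hcol : lam • (wim - wi) = wi - wip)
    (h3 : det2 wim wip ≠ 0) :
    (det2 wim2 wim + det2 wim wi + det2 wi wim2) / (det2 wim2 wim * det2 wim wi)
      = (det2 wim2 wim + det2 wim wip + det2 wip wim2) / (det2 wim2 wim * det2 wim wip) := by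
  have hline : wip - wim = (1 + lam) • (wi - wim) := by
    linear_combination (norm := module) hcol
  have hscale : 1 + lam ≠ 0 :=
    left_ne_zero_of_mul (det2_eq_mul_of_sub_eq_smul hline ▸ h3)
  exact cycle_coeff_eq_of_sub_eq_smul wim2 wim wi wip hline hscale

/-- invariance of the cycle-length coefficient under a modification
along a circuit of three collinear points. -/
theorem stmt_7 (wim2 wim wi wip : ℝ × ℝ) (lam : ℝ)
    (hcol : lam • (wim - wi) = wi - wip)
    (hsum : det2 wim wi + det2 wi wip = det2 wim wip)
    (hlam : det2 wi wip = lam * det2 wim wi)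
    (h1 : det2 wim2 wim ≠ 0) (h2 : det2 wim wi ≠ 0)
    (h3 : det2 wim wip ≠ 0) (h4 : det2 wi wip ≠ 0) :
    (det2 wim2 wim + det2 wim wi + det2 wi wim2) / (det2 wim2 wim * det2 wim wi)
      = (det2 wim2 wim + det2 wim wip + det2 wip wim2) / (det2 wim2 wim * det2 wim wip) :=
  stmt_7_general wim2 wim wi wip lam hcol h3
end

section
/- Let K be a valued field and h = Σ_{ω∈A} h_ω x^ω ∈ K[x_1,…,x_k]. If ξ ∈ (K*)^k is a singular point of V(h) (i.e. h(ξ) = 0 and all ∂h/∂x_i(ξ) = 0), and ω = (val(ξ_1),…,val(ξ_k)), ξ_0 = (lc(ξ_1),…,lc(ξ_k)) ∈ (ℂ*)^k, then ξ_0 is a singular point of the t-initial form tini_ω(h): tini_ω(h)(ξ_0) = 0 and ∂tini_ω(h)/∂x_i(ξ_0) = 0 for all i. -/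
open MvPolynomial
open scoped Classical

/-- The field of (generalized) Puiseux series over ℂ: Hahn series with rational
exponents; the valuation is `HahnSeries.order` and the leading coefficient is
`HahnSeries.leadingCoeff`. -/
abbrev K := HahnSeries ℚ ℂ

/-- The t-initial form of `h ∈ K[x_1,…,x_k]` with respect to `v ∈ ℚ^k`: the complex
polynomial whose terms are the leading coefficients of those terms of `h` whose
weight `val(h_ω) + v·ω` is minimal. -/
noncomputable def tini {k : ℕ} (h : MvPolynomial (Fin k) K) (v : Fin k → ℚ) :
    MvPolynomial (Fin k) ℂ :=
  ∑ ω ∈ h.support.filter (fun ω => ∀ ω' ∈ h.support,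
      (h.coeff ω).order + ∑ i, v i * (ω i : ℚ)
        ≤ (h.coeff ω').order + ∑ i, v i * (ω' i : ℚ)),
    MvPolynomial.monomial ω ((h.coeff ω).leadingCoeff)

/-!
Write `h(ξ) = ∑_ω h_ω ξ^ω`. Since ξ has no zero coordinate, the term `h_ω ξ^ω` is a nonzero
Puiseux series of order `val(h_ω) + ω · val(ξ)` (the weight of `ω`) and leading coefficient
`lc(h_ω) ξ₀^ω`. If a linear combination of nonzero series vanishes, so does the corresponding
combination of the leading coefficients of the terms of minimal order: it is the coefficient of
`t^m`, `m` the minimal order. With all coefficients `1` this gives `tini_ω(h)(ξ₀) = 0`. For the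
derivatives apply it with coefficients `ω_i`: the Euler operator `x_i ∂/∂x_i` multiplies `x^ω`
by `ω_i`, so the combination is `ξ_i ∂h/∂x_i(ξ) = 0`, and its leading part is
`ξ₀_i ∂tini_ω(h)/∂x_i(ξ₀)`.
-/

namespace HahnSeries

variable {Γ R α : Type*}

theorem sum_mul_leadingCoeff_of_forall_order_le_eq_zero [Zero Γ] [LinearOrder Γ] [Semiring R]
    {s : Finset α} {f : α → HahnSeries Γ R} (hf : ∀ a ∈ s, f a ≠ 0) (c : α → R)
    (hsum : ∑ a ∈ s, c a • f a = 0) :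
    ∑ a ∈ s with ∀ b ∈ s, (f a).order ≤ (f b).order, c a * (f a).leadingCoeff = 0 := by
  obtain rfl | hs := s.eq_empty_or_nonempty
  · simp
  obtain ⟨a₀, ha₀, hmin⟩ := s.exists_min_image (fun a => (f a).order) hs
  calc ∑ a ∈ s with ∀ b ∈ s, (f a).order ≤ (f b).order, c a * (f a).leadingCoeff
      = ∑ a ∈ s, c a * (f a).coeff (f a₀).order := by
        rw [Finset.sum_filter]
        refine Finset.sum_congr rfl fun a ha => ?_
        split_ifs with hle
        · rw [leadingCoeff_eq, le_antisymm (hle a₀ ha₀) (hmin a ha)]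
        · have hlt : (f a₀).order < (f a).order :=
            (hmin a ha).lt_of_ne fun heq => hle fun b hb => heq ▸ hmin b hb
          rw [coeff_eq_zero_of_lt_order hlt, mul_zero]
    _ = (∑ a ∈ s, c a • f a).coeff (f a₀).order := by simp [coeff_sum, coeff_smul]
    _ = 0 := by rw [hsum, coeff_zero]

variable [AddCommMonoid Γ] [LinearOrder Γ] [IsOrderedCancelAddMonoid Γ]
  [CommSemiring R] [IsDomain R] {σ : Type*}

theorem order_prod {s : Finset α} {f : α → HahnSeries Γ R} (hf : ∀ a ∈ s, f a ≠ 0) :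
    (∏ a ∈ s, f a).order = ∑ a ∈ s, (f a).order := by
  induction s using Finset.cons_induction with
  | empty => simp
  | cons a s ha ih =>
    rw [Finset.forall_mem_cons] at hf
    rw [Finset.prod_cons, Finset.sum_cons,
      order_mul hf.1 (Finset.prod_ne_zero_iff.2 hf.2), ih hf.2]

theorem leadingCoeff_prod (s : Finset α) (f : α → HahnSeries Γ R) :
    (∏ a ∈ s, f a).leadingCoeff = ∏ a ∈ s, (f a).leadingCoeff := by
  induction s using Finset.cons_induction with
  | empty => simp
  | cons a s ha ih => rw [Finset.prod_cons, Finset.prod_cons, leadingCoeff_mul, ih]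

theorem leadingCoeff_pow (x : HahnSeries Γ R) (n : ℕ) :
    (x ^ n).leadingCoeff = x.leadingCoeff ^ n := by
  simpa using leadingCoeff_prod (Finset.range n) fun _ => x

theorem order_eval_monomial {ξ : σ → HahnSeries Γ R} (hξ : ∀ i, ξ i ≠ 0) (ω : σ →₀ ℕ)
    {a : HahnSeries Γ R} (ha : a ≠ 0) :
    (eval ξ (monomial ω a)).order = a.order + ω.sum fun i e => e • (ξ i).order := by
  have hpow : ∀ i ∈ ω.support, ξ i ^ ω i ≠ 0 := fun i _ => pow_ne_zero _ (hξ i)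
  rw [eval_monomial, Finsupp.prod, order_mul ha (Finset.prod_ne_zero_iff.2 hpow), order_prod hpow]
  simp [Finsupp.sum]

theorem leadingCoeff_eval_monomial (ξ : σ → HahnSeries Γ R) (ω : σ →₀ ℕ)
    (a : HahnSeries Γ R) :
    (eval ξ (monomial ω a)).leadingCoeff
      = eval (fun i => (ξ i).leadingCoeff) (monomial ω a.leadingCoeff) := by
  simp [eval_monomial, Finsupp.prod, leadingCoeff_prod, leadingCoeff_pow]

end HahnSeries

namespace MvPolynomial

variable {R σ : Type*} [CommSemiring R]

theorem eval_X_mul_pderiv_sum_monomial (y : σ → R) (i : σ) (s : Finset (σ →₀ ℕ))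
    (a : (σ →₀ ℕ) → R) :
    eval y (X i * pderiv i (∑ ω ∈ s, monomial ω (a ω)))
      = ∑ ω ∈ s, ω i • eval y (monomial ω (a ω)) := by
  simp only [map_sum, Finset.mul_sum, X_mul_pderiv_monomial, map_nsmul]

theorem eval_eq_sum_eval_monomial_s10 (y : σ → R) (p : MvPolynomial σ R) :
    eval y p = ∑ ω ∈ p.support, eval y (monomial ω (p.coeff ω)) := by
  conv_lhs => rw [p.as_sum]
  exact map_sum _ _ _

end MvPolynomial

noncomputable def minWeightExponents {k : ℕ} (h : MvPolynomial (Fin k) K) (v : Fin k → ℚ) :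
    Finset (Fin k →₀ ℕ) :=
  h.support.filter fun ω => ∀ ω' ∈ h.support,
    (h.coeff ω).order + ∑ i, v i * (ω i : ℚ) ≤ (h.coeff ω').order + ∑ i, v i * (ω' i : ℚ)

theorem tini_eq_sum {k : ℕ} (h : MvPolynomial (Fin k) K) (v : Fin k → ℚ) :
    tini h v = ∑ ω ∈ minWeightExponents h v, monomial ω (h.coeff ω).leadingCoeff :=
  rfl

theorem sum_mul_eval_monomial_minWeightExponents_eq_zero {k : ℕ} {h : MvPolynomial (Fin k) K}
    {ξ : Fin k → K} (hξ : ∀ i, ξ i ≠ 0) (c : (Fin k →₀ ℕ) → ℂ)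
    (hc : ∑ ω ∈ h.support, c ω • eval ξ (monomial ω (h.coeff ω)) = 0) :
    ∑ ω ∈ minWeightExponents h fun i => (ξ i).order,
      c ω * eval (fun i => (ξ i).leadingCoeff) (monomial ω (h.coeff ω).leadingCoeff) = 0 := by
  have hne : ∀ ω ∈ h.support, eval ξ (monomial ω (h.coeff ω)) ≠ 0 := fun ω hω => by
    simpa [eval_monomial, Finsupp.prod, Finset.prod_ne_zero_iff, hξ] using hω
  have hord : ∀ ω ∈ h.support, (eval ξ (monomial ω (h.coeff ω))).order
      = (h.coeff ω).order + ∑ i, (ξ i).order * (ω i : ℚ) := fun ω hω => by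
    rw [HahnSeries.order_eval_monomial hξ ω (mem_support_iff.1 hω),
      Finsupp.sum_fintype _ _ (by simp)]
    simp [mul_comm]
  have key := HahnSeries.sum_mul_leadingCoeff_of_forall_order_le_eq_zero hne c hc
  have hmin : {ω ∈ h.support | ∀ ω' ∈ h.support, (eval ξ (monomial ω (h.coeff ω))).order
      ≤ (eval ξ (monomial ω' (h.coeff ω'))).order} = minWeightExponents h fun i => (ξ i).order :=
    Finset.filter_congr fun ω hω => forall₂_congr fun ω' hω' => by rw [hord ω hω, hord ω' hω']
  simpa only [hmin, HahnSeries.leadingCoeff_eval_monomial] using key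

/-- if `ξ ∈ (K*)^k` is a singular point of `V(h)`, then the point
`ξ₀ = (lc ξ_1, …, lc ξ_k) ∈ (ℂ*)^k` is a singular point of the t-initial form
`tini_ω(h)`, where `ω = (val ξ_1, …, val ξ_k)`. -/
theorem stmt_10 {k : ℕ} (h : MvPolynomial (Fin k) K) (ξ : Fin k → K)
    (hξ0 : ∀ i, ξ i ≠ 0)
    (hsing : eval ξ h = 0 ∧ ∀ i, eval ξ (pderiv i h) = 0) :
    (∀ i, (ξ i).leadingCoeff ≠ 0) ∧
    eval (fun i => (ξ i).leadingCoeff) (tini h (fun i => (ξ i).order)) = 0 ∧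
    ∀ i, eval (fun i => (ξ i).leadingCoeff)
        (pderiv i (tini h (fun i => (ξ i).order))) = 0 := by
  set ξ₀ : Fin k → ℂ := fun i => (ξ i).leadingCoeff
  have hξ₀ : ∀ i, ξ₀ i ≠ 0 := fun i => HahnSeries.leadingCoeff_ne_zero.2 (hξ0 i)
  refine ⟨hξ₀, ?_, fun i => ?_⟩
  · rw [tini_eq_sum, map_sum]
    simpa using sum_mul_eval_monomial_minWeightExponents_eq_zero hξ0 1
      (by simpa [← eval_eq_sum_eval_monomial_s10] using hsing.1)
  · have hEuler := eval_X_mul_pderiv_sum_monomial ξ i h.support h.coeff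
    rw [← h.as_sum, map_mul, eval_X, hsing.2 i, mul_zero] at hEuler
    have key := sum_mul_eval_monomial_minWeightExponents_eq_zero (h := h) hξ0 (fun ω => (ω i : ℂ))
      (by rw [hEuler]; exact Finset.sum_congr rfl fun ω _ =>
        Nat.cast_smul_eq_nsmul ℂ (ω i) (eval ξ (monomial ω (h.coeff ω))))
    have hEuler₀ : ξ₀ i * eval ξ₀ (pderiv i (tini h fun i => (ξ i).order)) = 0 := by
      rw [← eval_X (f := ξ₀) i, ← map_mul, tini_eq_sum, eval_X_mul_pderiv_sum_monomial]
      simpa [nsmul_eq_mul] using key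
    exact (mul_eq_zero.1 hEuler₀).resolve_left (hξ₀ i)
end
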